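/- arXiv:1004.2349 — 4 statements merged into one kernel-verified Lean document; each statement's English description precedes it below -/
import Mathlib

section
/- In the quantum torus with X_1 X_2 = q X_2 X_1 and cluster variables X_m defined by X_{m-1} X_{m+1} = q X_m^2 + 1, one has X_{-1} = X^{(3,-2)} + X^{(-1,-2)} + (q + q^{-1}) X^{(1,-2)} + X^{(-1,0)}, where X^{(a,b)} = q^{ab/2} X_1^a X_2^b. -/
/-!
Normalized monomials multiply by the rule `X^{(a,b)} X^{(c,d)} = v^{ad-bc} X^{(a+c,b+d)}`.
With it one checks that `X^{(2,-1)} + X^{(0,-1)}` satisfies the exchange relation defining `X_0`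
from `X_1, X_2`, and that the claimed expression satisfies the one defining `X_{-1}` from
`X_0, X_1`. As the `X_m` are nonzero, each exchange relation determines `X_{m-1}` uniquely.
-/

/-- The normalized quantum-torus monomial `X^{(a,b)} = q^{-ab/2} X₁^a X₂^b`,
where `v = q^{1/2}`. -/
def Xmon {F : Type*} [DivisionRing F] (v X1 X2 : F) (a b : ℤ) : F :=
  v ^ (-(a * b)) * X1 ^ a * X2 ^ b

section

variable {F : Type*} [DivisionRing F]

theorem mul_zpow_eq_of_mul_eq {w a b : F} (hwa : Commute w a) (h : b * a = w * a * b) (n : ℤ) :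
    b * a ^ n = w ^ n * a ^ n * b := by
  rw [← hwa.mul_zpow]
  exact SemiconjBy.zpow_right₀ h n

theorem mul_eq_inv_mul_of_mul_eq {w a b : F} (hw : w ≠ 0) (h : b * a = w * a * b) :
    a * b = w⁻¹ * b * a := by
  rw [mul_assoc, h, mul_assoc, inv_mul_cancel_left₀ hw]

theorem zpow_mul_zpow_eq_of_mul_eq {w a b : F} (hw : w ≠ 0) (hwa : Commute w a)
    (hwb : Commute w b) (h : b * a = w * a * b) (m n : ℤ) :
    b ^ m * a ^ n = w ^ (m * n) * a ^ n * b ^ m := by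
  have hwn : w ^ n ≠ 0 := zpow_ne_zero n hw
  have h' : a ^ n * b ^ m = ((w ^ n)⁻¹) ^ m * b ^ m * a ^ n :=
    mul_zpow_eq_of_mul_eq ((hwb.zpow_left₀ n).inv_left₀)
      (mul_eq_inv_mul_of_mul_eq hwn (mul_zpow_eq_of_mul_eq hwa h n)) m
  rw [mul_eq_inv_mul_of_mul_eq (zpow_ne_zero m (inv_ne_zero hwn)) h', inv_zpow, inv_inv,
    ← zpow_mul, mul_comm]

variable {v x₁ x₂ : F}

@[simp] theorem Xmon_zero_zero : Xmon v x₁ x₂ 0 0 = 1 := by simp [Xmon]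

@[simp] theorem Xmon_one_zero : Xmon v x₁ x₂ 1 0 = x₁ := by simp [Xmon]

@[simp] theorem Xmon_zero_one : Xmon v x₁ x₂ 0 1 = x₂ := by simp [Xmon]

theorem Xmon_mul_Xmon (hv : v ≠ 0) (hvc : ∀ x : F, Commute v x) (h₁ : x₁ ≠ 0) (h₂ : x₂ ≠ 0)
    (h₁₂ : x₁ * x₂ = v ^ 2 * (x₂ * x₁)) (a b c d : ℤ) :
    Xmon v x₁ x₂ a b * Xmon v x₁ x₂ c d = v ^ (a * d - b * c) * Xmon v x₁ x₂ (a + c) (b + d) := by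
  have h₂₁ : x₂ * x₁ = v ^ (-2 : ℤ) * x₁ * x₂ := by
    rw [mul_assoc, h₁₂, zpow_neg, zpow_ofNat, inv_mul_cancel_left₀ (pow_ne_zero 2 hv)]
  have hswap : x₂ ^ b * x₁ ^ c = v ^ (-2 * (b * c)) * x₁ ^ c * x₂ ^ b := by
    rw [zpow_mul]
    exact zpow_mul_zpow_eq_of_mul_eq (zpow_ne_zero _ hv) ((hvc x₁).zpow_left₀ _)
      ((hvc x₂).zpow_left₀ _) h₂₁ b c
  simp only [Xmon]
  calc v ^ (-(a * b)) * x₁ ^ a * x₂ ^ b * (v ^ (-(c * d)) * x₁ ^ c * x₂ ^ d)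
      = v ^ (-(a * b)) * v ^ (-(c * d)) * x₁ ^ a * (x₂ ^ b * x₁ ^ c) * x₂ ^ d := by
        simp only [mul_assoc, ((hvc _).zpow_left₀ (-(c * d))).left_comm]
    _ = v ^ (-(a * b)) * v ^ (-(c * d)) * v ^ (-2 * (b * c)) * (x₁ ^ a * x₁ ^ c) *
          (x₂ ^ b * x₂ ^ d) := by
        rw [hswap]
        simp only [mul_assoc, ((hvc _).zpow_left₀ (-2 * (b * c))).left_comm]
    _ = v ^ (a * d - b * c) * (v ^ (-((a + c) * (b + d))) * x₁ ^ (a + c) * x₂ ^ (b + d)) := by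
        simp only [← mul_assoc, ← zpow_add₀ h₁, ← zpow_add₀ h₂, ← zpow_add₀ hv]
        congr 3
        ring

def laurentX0 (v x₁ x₂ : F) : F :=
  Xmon v x₁ x₂ 2 (-1) + Xmon v x₁ x₂ 0 (-1)

def laurentXneg1 (v x₁ x₂ : F) : F :=
  Xmon v x₁ x₂ 3 (-2) + Xmon v x₁ x₂ (-1) (-2)
    + (v ^ (2 : ℤ) + v ^ (-2 : ℤ)) * Xmon v x₁ x₂ 1 (-2) + Xmon v x₁ x₂ (-1) 0

theorem laurentX0_mul (hv : v ≠ 0) (hvc : ∀ x : F, Commute v x) (h₁ : x₁ ≠ 0) (h₂ : x₂ ≠ 0)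
    (h₁₂ : x₁ * x₂ = v ^ 2 * (x₂ * x₁)) :
    laurentX0 v x₁ x₂ * x₂ = v ^ 2 * x₁ ^ 2 + 1 := by
  conv_lhs => arg 2; rw [← Xmon_zero_one (v := v) (x₁ := x₁) (x₂ := x₂)]
  rw [laurentX0, add_mul, Xmon_mul_Xmon hv hvc h₁ h₂ h₁₂, Xmon_mul_Xmon hv hvc h₁ h₂ h₁₂]
  norm_num [Xmon]

theorem laurentXneg1_mul (hv : v ≠ 0) (hvc : ∀ x : F, Commute v x) (h₁ : x₁ ≠ 0) (h₂ : x₂ ≠ 0)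
    (h₁₂ : x₁ * x₂ = v ^ 2 * (x₂ * x₁)) :
    laurentXneg1 v x₁ x₂ * x₁ = v ^ 2 * laurentX0 v x₁ x₂ ^ 2 + 1 := by
  conv_lhs => arg 2; rw [← Xmon_one_zero (v := v) (x₁ := x₁) (x₂ := x₂)]
  simp only [laurentXneg1, laurentX0, sq, add_mul, mul_add, mul_assoc,
    Xmon_mul_Xmon hv hvc h₁ h₂ h₁₂]
  norm_num
  have hv2 : v ^ 2 ≠ 0 := pow_ne_zero 2 hv
  simp only [← mul_assoc, ← sq, inv_mul_cancel₀ hv2, mul_inv_cancel₀ hv2, one_mul]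
  abel

end

/-- `X_{-1} = X^{(3,-2)} + X^{(-1,-2)} + (q + q^{-1}) X^{(1,-2)} + X^{(-1,0)}` in the
quantum torus, where `v = q^{1/2}`. -/
theorem cluster_Xneg1
{F : Type*} [DivisionRing F] (v : F) (hv : v ≠ 0)
    (hvc : ∀ x : F, v * x = x * v)
    (X : ℤ → F) (hXne : ∀ m : ℤ, X m ≠ 0)
    (h12 : X 1 * X 2 = v ^ 2 * (X 2 * X 1))
    (hrec : ∀ m : ℤ, X (m - 1) * X (m + 1) = v ^ 2 * X m ^ 2 + 1) :
    X (-1) = Xmon v (X 1) (X 2) 3 (-2) + Xmon v (X 1) (X 2) (-1) (-2)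
      + (v ^ (2 : ℤ) + v ^ (-2 : ℤ)) * Xmon v (X 1) (X 2) 1 (-2)
      + Xmon v (X 1) (X 2) (-1) 0 := by
  have h₁ := hXne 1
  have h₂ := hXne 2
  have hX0 : X 0 = laurentX0 v (X 1) (X 2) := by
    refine mul_right_cancel₀ h₂ ?_
    rw [laurentX0_mul hv hvc h₁ h₂ h12]
    simpa using hrec 1
  have hXneg1 : X (-1) = laurentXneg1 v (X 1) (X 2) := by
    refine mul_right_cancel₀ h₁ ?_
    rw [laurentXneg1_mul hv hvc h₁ h₂ h12, ← hX0]
    simpa using hrec 0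
  exact hXneg1
end

section
/- In the quantum cluster algebra of the Kronecker quiver, define X_δ := q^{1/2}(X_0 X_3 - q X_1 X_2). Then also X_δ = q^{1/2}(X_{-1} X_2 - q X_0 X_1), and moreover X_δ = X^{(-1,1)} + X^{(1,-1)} + X^{(-1,-1)}. -/
section QuasiCommute

variable {F : Type*} [DivisionRing F]

def QuasiCommute (q x y : F) : Prop := x * y = q * (y * x)

variable {q : F}

theorem QuasiCommute.inv_inv {a b : F} (hq : ∀ x, Commute q x) (h : QuasiCommute q a b) :
    QuasiCommute q⁻¹ b⁻¹ a⁻¹ := by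
  rw [QuasiCommute, ← mul_inv_rev, h, mul_inv_rev, mul_inv_rev, (hq _).inv_left₀.eq]

theorem QuasiCommute.of_exchange {a b c : F} (hq : ∀ x, Commute q x) (hb : b ≠ 0)
    (h : QuasiCommute q a b) (hc : c * b = q * a ^ 2 + 1) : QuasiCommute q c a := by
  have hcomm : Commute (q * a ^ 2 + 1) a :=
    ((hq a).mul_left ((Commute.refl a).pow_left 2)).add_left (Commute.one_left a)
  refine mul_right_cancel₀ hb ?_
  calc c * a * b = c * (q * (b * a)) := by rw [mul_assoc, h]
    _ = q * ((q * a ^ 2 + 1) * a) := by rw [← (hq c).left_comm, ← hc, mul_assoc]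
    _ = q * (a * c) * b := by rw [hcomm.eq, ← hc, mul_assoc, mul_assoc]

/-- Invariance of `X_{m-1}X_{m+2} - q·X_m X_{m+1}` under the shift `m ↦ m + 1`,
for `y, x₀, …, x₃` playing the roles of `X_{m-1}, …, X_{m+3}`. -/
theorem mul_sub_mul_eq_of_exchange {y x₀ x₁ x₂ x₃ : F} (hq : ∀ x, Commute q x) (hq₀ : q ≠ 0)
    (h₁ : x₁ ≠ 0) (h₀₁ : QuasiCommute q x₀ x₁) (e₀ : y * x₁ = q * x₀ ^ 2 + 1)
    (e₁ : x₀ * x₂ = q * x₁ ^ 2 + 1) (e₂ : x₁ * x₃ = q * x₂ ^ 2 + 1) :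
    y * x₂ - q * (x₀ * x₁) = x₀ * x₃ - q * (x₁ * x₂) := by
  have hq' : ∀ x z, x * (q * z) = q * (x * z) := fun x z => ((hq x).left_comm z).symm
  have hy : q * (x₁ * y) = x₀ ^ 2 + q := by
    refine mul_right_cancel₀ h₁ ?_
    calc q * (x₁ * y) * x₁ = q * (q * (x₁ * x₀) * x₀) + q * x₁ := by
          simp only [mul_assoc, e₀, mul_add, hq', sq, mul_one]
      _ = (x₀ ^ 2 + q) * x₁ := by rw [← h₀₁, mul_assoc, ← hq', ← h₀₁, add_mul, sq, mul_assoc]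
  refine mul_left_cancel₀ (mul_ne_zero hq₀ h₁) ?_
  calc q * x₁ * (y * x₂ - q * (x₀ * x₁))
        = x₀ * (x₀ * x₂) + q * x₂ - q * (q * (x₁ * x₀) * x₁) := by
          rw [mul_sub, mul_assoc, ← mul_assoc x₁, ← mul_assoc q, hy]
          simp only [add_mul, mul_assoc, sq, hq']
      _ = x₀ + q * x₂ := by
          rw [e₁, ← h₀₁]
          simp only [mul_add, mul_assoc, hq', sq, mul_one]
          abel
      _ = q * (x₀ * x₂ * x₂) + x₀ - q * (q * (x₁ * (x₁ * x₂))) := by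
          rw [e₁]
          simp only [add_mul, mul_add, mul_assoc, hq', sq, one_mul]
          abel
      _ = q * x₁ * (x₀ * x₃ - q * (x₁ * x₂)) := by
          rw [mul_sub, ← mul_assoc (q * x₁), mul_assoc q x₁ x₀, ← h₀₁, mul_assoc x₀ x₁ x₃, e₂]
          simp only [mul_add, mul_assoc, hq', sq, mul_one]

theorem mul_sub_mul_eq_laurent {v a b x₀ x₃ : F} (hvc : ∀ x, Commute v x) (hv : v ≠ 0)
    (ha : a ≠ 0) (hb : b ≠ 0) (hab : QuasiCommute (v ^ 2) a b)
    (e₁ : x₀ * b = v ^ 2 * a ^ 2 + 1) (e₂ : a * x₃ = v ^ 2 * b ^ 2 + 1) :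
    v * (x₀ * x₃ - v ^ 2 * (a * b)) = v * (a⁻¹ * b) + v * (a * b⁻¹) + v⁻¹ * (a⁻¹ * b⁻¹) := by
  have hq : ∀ x, Commute (v ^ 2) x := fun x => (hvc x).pow_left 2
  have hprod : v ^ 2 * (x₀ * x₃) = (v ^ 2 * a + a⁻¹) * (v ^ 2 * b + b⁻¹) := by
    have ha' : (v ^ 2 * a ^ 2 + 1) * a⁻¹ = v ^ 2 * a + a⁻¹ := by
      rw [add_mul, one_mul, mul_assoc, sq a, mul_inv_cancel_right₀ ha]
    have hb' : b⁻¹ * (v ^ 2 * b ^ 2 + 1) = v ^ 2 * b + b⁻¹ := by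
      rw [mul_add, mul_one, ← (hq _).left_comm, sq b, inv_mul_cancel_left₀ hb]
    rw [(eq_mul_inv_iff_mul_eq₀ hb).2 e₁, (eq_inv_mul_iff_mul_eq₀ ha).2 e₂, mul_assoc,
      ← mul_assoc b⁻¹, hab.inv_inv hq, mul_assoc (v ^ 2)⁻¹,
      ← (hq _).inv_left₀.left_comm, mul_inv_cancel_left₀ (pow_ne_zero 2 hv), ← ha', ← hb']
    simp only [mul_assoc]
  have hv' : ∀ x z, x * (v * z) = v * (x * z) := fun x z => ((hvc x).left_comm z).symm
  calc v * (x₀ * x₃ - v ^ 2 * (a * b))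
      = v⁻¹ * (v ^ 2 * (x₀ * x₃)) - v * (v ^ 2 * (a * b)) := by
        rw [sq, mul_assoc v v (x₀ * x₃), inv_mul_cancel_left₀ hv, mul_sub]
    _ = v * (a⁻¹ * b) + v * (a * b⁻¹) + v⁻¹ * (a⁻¹ * b⁻¹) := by
        rw [hprod]
        simp only [sq, mul_add, add_mul, mul_assoc, hv', mul_inv_cancel_left₀ hv]
        abel

end QuasiCommute

/-- With `X_δ := q^{1/2}(X₀X₃ - qX₁X₂)`, one also has
`X_δ = q^{1/2}(X₋₁X₂ - qX₀X₁)` and `X_δ = X^{(-1,1)} + X^{(1,-1)} + X^{(-1,-1)}`. -/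
theorem Xdelta_eq
{F : Type*} [DivisionRing F] (v : F) (hv : v ≠ 0)
    (hvc : ∀ x : F, v * x = x * v)
    (X : ℤ → F) (hXne : ∀ m : ℤ, X m ≠ 0)
    (h12 : X 1 * X 2 = v ^ 2 * (X 2 * X 1))
    (hrec : ∀ m : ℤ, X (m - 1) * X (m + 1) = v ^ 2 * X m ^ 2 + 1) :
    v * (X 0 * X 3 - v ^ 2 * (X 1 * X 2)) = v * (X (-1) * X 2 - v ^ 2 * (X 0 * X 1)) ∧
      v * (X 0 * X 3 - v ^ 2 * (X 1 * X 2))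
        = Xmon v (X 1) (X 2) (-1) 1 + Xmon v (X 1) (X 2) 1 (-1)
          + Xmon v (X 1) (X 2) (-1) (-1) := by
  have hq : ∀ x, Commute (v ^ 2) x := fun x => Commute.pow_left (hvc x) 2
  have e₀ : X (-1) * X 1 = v ^ 2 * X 0 ^ 2 + 1 := by simpa using hrec 0
  have e₁ : X 0 * X 2 = v ^ 2 * X 1 ^ 2 + 1 := by simpa using hrec 1
  have e₂ : X 1 * X 3 = v ^ 2 * X 2 ^ 2 + 1 := by simpa using hrec 2
  have h₀₁ : QuasiCommute (v ^ 2) (X 0) (X 1) := .of_exchange hq (hXne 2) h12 e₁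
  refine ⟨?_, ?_⟩
  · rw [mul_sub_mul_eq_of_exchange hq (pow_ne_zero 2 hv) (hXne 1) h₀₁ e₀ e₁ e₂]
  · rw [mul_sub_mul_eq_laurent hvc hv (hXne 1) (hXne 2) h12 e₁ e₂]
    simp [Xmon, mul_assoc]
end

section
/- Let X_δ = q^{1/2}(X_0 X_3 - q X_1 X_2) = X^{(-1,1)} + X^{(1,-1)} + X^{(-1,-1)} in the quantum torus. Then for every integer n, X_n · X_δ = q^{-1/2} X_{n-1} + q^{1/2} X_{n+1}. -/
@[elab_as_elim]
theorem Int.forall_of_iff_add_one {P : ℤ → Prop} {k : ℤ} (hk : P k)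
    (h : ∀ m, P m ↔ P (m + 1)) (n : ℤ) : P n :=
  Int.inductionOn' n k hk (fun m _ hm => (h m).1 hm)
    (fun m _ hm => (h (m - 1)).2 (by rwa [sub_add_cancel]))

section Ring

variable {R : Type*} [Ring R] {q a b c d D : R}

theorem mul_pow_eq_of_mul_eq (hq : ∀ x : R, Commute q x) (hab : a * b = q * (b * a)) (n : ℕ) :
    a * b ^ n = q ^ n * (b ^ n * a) := by
  induction n with
  | zero => simp
  | succ n ih =>
    calc a * b ^ (n + 1) = q ^ n * (b ^ n * (a * b)) := by
          rw [pow_succ, ← mul_assoc, ih, mul_assoc, mul_assoc]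
      _ = q ^ (n + 1) * (b ^ (n + 1) * a) := by
          rw [hab, ← (hq _).left_comm, ← mul_assoc, ← pow_succ, ← mul_assoc (b ^ n), ← pow_succ]

theorem mul_delta_eq (hq : ∀ x : R, Commute q x) (hab : a * b = q * (b * a))
    (hac : a * c = q * b ^ 2 + 1) (hbd : b * d = q * c ^ 2 + 1) :
    b * (q * (a * d - q * (b * c))) = a + q * c :=
  calc b * (q * (a * d - q * (b * c))) = q * (b * a) * d - q ^ 2 * (b * (b * c)) := by
        rw [← (hq b).left_comm, mul_sub, ← (hq b).left_comm]; noncomm_ring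
    _ = a * (b * d) - q ^ 2 * (b ^ 2 * c) := by rw [← hab]; noncomm_ring
    _ = q * ((a * c) * c) + a - q ^ 2 * (b ^ 2 * c) := by
        rw [hbd, mul_add, ← (hq a).left_comm]; noncomm_ring
    _ = a + q * c := by rw [hac]; noncomm_ring

variable [NoZeroDivisors R]

theorem mul_eq_mul_iff_of_commute (hq : ∀ x : R, Commute q x) (ha : a ≠ 0) (hc : c ≠ 0)
    (hb : Commute b (a * c)) : a * b = q * (b * a) ↔ b * c = q * (c * b) :=
  calc a * b = q * (b * a) ↔ a * b * c = q * (b * a) * c := (mul_left_inj' hc).symm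
    _ ↔ a * (b * c) = a * (q * (c * b)) := by
      rw [mul_assoc, mul_assoc q, mul_assoc b, hb.eq, mul_assoc, ← (hq a).left_comm]
    _ ↔ b * c = q * (c * b) := mul_right_inj' ha

theorem mul_mul_eq_sq_add (hq : ∀ x : R, Commute q x) (ha : a ≠ 0) (hab : a * b = q * (b * a))
    (hac : a * c = q * b ^ 2 + 1) : q * (c * a) = b ^ 2 + q := by
  refine mul_left_cancel₀ ha ?_
  calc a * (q * (c * a)) = q * ((a * c) * a) := by rw [← (hq a).left_comm, mul_assoc]
    _ = q ^ 2 * (b ^ 2 * a) + q * a := by noncomm_ring [hac]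
    _ = a * (b ^ 2 + q) := by rw [← mul_pow_eq_of_mul_eq hq hab, mul_add, (hq a).eq]

theorem mul_eq_add_iff_mul_eq_add (hq : ∀ x : R, Commute q x) (hb : b ≠ 0) (hc : c ≠ 0)
    (hbc : b * c = q * (c * b)) (hca : q * (c * a) = b ^ 2 + q) (hbd : b * d = q * c ^ 2 + 1) :
    b * D = a + q * c ↔ c * D = b + q * d := by
  have hqc : q * c ≠ 0 :=
    left_ne_zero_of_mul (b := b) (by rw [mul_assoc, ← hbc]; exact mul_ne_zero hb hc)
  have hD : q * c * (b * D) = b * (c * D) := by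
    rw [mul_assoc q, ← mul_assoc c, ← mul_assoc q, ← hbc, mul_assoc]
  have hrhs : q * c * (a + q * c) = b * (b + q * d) :=
    calc q * c * (a + q * c) = q * (c * a) + q * (c * (q * c)) := by noncomm_ring
      _ = b ^ 2 + q + q ^ 2 * c ^ 2 := by rw [hca, ← (hq c).left_comm]; noncomm_ring
      _ = b * (b + q * d) := by rw [mul_add, ← (hq b).left_comm, hbd]; noncomm_ring
  rw [← mul_right_inj' hqc, hD, hrhs, mul_right_inj' hb]

end Ring

section Recurrence

variable {R : Type*} [Ring R] [NoZeroDivisors R] {q : R} {X : ℤ → R}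

theorem mul_succ_eq_of_recurrence (hq : ∀ x : R, Commute q x) (hX : ∀ m, X m ≠ 0)
    (hrec : ∀ m, X (m - 1) * X (m + 1) = q * X m ^ 2 + 1) {k : ℤ}
    (hk : X k * X (k + 1) = q * (X (k + 1) * X k)) (m : ℤ) :
    X m * X (m + 1) = q * (X (m + 1) * X m) := by
  refine Int.forall_of_iff_add_one hk (fun j => ?_) m
  refine mul_eq_mul_iff_of_commute hq (hX j) (hX (j + 1 + 1)) ?_
  have hrec' := hrec (j + 1)
  rw [add_sub_cancel_right] at hrec'
  rw [hrec']
  exact ((hq _).symm.mul_right ((Commute.refl _).pow_right 2)).add_right (Commute.one_right _)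

theorem mul_pred_eq_of_recurrence (hq : ∀ x : R, Commute q x) (hX : ∀ m, X m ≠ 0)
    (hrec : ∀ m, X (m - 1) * X (m + 1) = q * X m ^ 2 + 1)
    (hcomm : ∀ m, X m * X (m + 1) = q * (X (m + 1) * X m)) (m : ℤ) :
    q * (X (m + 1) * X (m - 1)) = X m ^ 2 + q := by
  have h := hcomm (m - 1)
  rw [sub_add_cancel] at h
  exact mul_mul_eq_sq_add hq (hX (m - 1)) h (hrec m)

theorem mul_delta_eq_of_recurrence (hq : ∀ x : R, Commute q x) (hX : ∀ m, X m ≠ 0)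
    (hrec : ∀ m, X (m - 1) * X (m + 1) = q * X m ^ 2 + 1)
    (h12 : X 1 * X 2 = q * (X 2 * X 1)) (n : ℤ) :
    X n * (q * (X 0 * X 3 - q * (X 1 * X 2))) = X (n - 1) + q * X (n + 1) := by
  have hcomm := mul_succ_eq_of_recurrence hq hX hrec h12
  refine Int.forall_of_iff_add_one (k := 1) ?_ (fun m => ?_) n
  · have h01 := hcomm 0
    have h02 := hrec 1
    have h13 := hrec 2
    norm_num at h01 h02 h13 ⊢
    exact mul_delta_eq hq h01 h02 h13
  · have hrec' := hrec (m + 1)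
    rw [add_sub_cancel_right] at hrec' ⊢
    exact mul_eq_add_iff_mul_eq_add hq (hX m) (hX (m + 1)) (hcomm m)
      (mul_pred_eq_of_recurrence hq hX hrec hcomm m) hrec'

end Recurrence

theorem mul_eq_inv_mul_add_iff {F : Type*} [DivisionRing F] {v x a c D : F}
    (hv : ∀ y : F, Commute v y) (hv0 : v ≠ 0) :
    x * D = v⁻¹ * a + v * c ↔ x * (v * D) = a + v ^ 2 * c := by
  rw [← (hv x).left_comm, ← eq_inv_mul_iff_mul_eq₀ hv0, mul_add, ← mul_assoc, sq, ← mul_assoc,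
    inv_mul_cancel₀ hv0, one_mul]

/-- With `X_δ = q^{1/2}(X₀X₃ - qX₁X₂)`, for every integer `n`,
`X_n X_δ = q^{-1/2} X_{n-1} + q^{1/2} X_{n+1}`. -/
theorem Xn_mul_Xdelta
{F : Type*} [DivisionRing F] (v : F) (hv : v ≠ 0)
    (hvc : ∀ x : F, v * x = x * v)
    (X : ℤ → F) (hXne : ∀ m : ℤ, X m ≠ 0)
    (h12 : X 1 * X 2 = v ^ 2 * (X 2 * X 1))
    (hrec : ∀ m : ℤ, X (m - 1) * X (m + 1) = v ^ 2 * X m ^ 2 + 1) :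
    ∀ n : ℤ, X n * (v * (X 0 * X 3 - v ^ 2 * (X 1 * X 2)))
      = v⁻¹ * X (n - 1) + v * X (n + 1) := by
  intro n
  rw [mul_eq_inv_mul_add_iff hvc hv, ← mul_assoc v, ← sq]
  exact mul_delta_eq_of_recurrence (fun x => Commute.pow_left (hvc x) 2) hXne hrec h12 n
end

section
/- Let σ be the ℚ(q^{1/2})-algebra automorphism of the skew field of fractions of the quantum torus determined by σ(X_m) = X_{m+1} for all m (equivalently σ(X_1) = X_2, σ(X_2) = X_3). Then σ(X_δ) = X_δ, where X_δ = q^{1/2}(X_0X_3 - qX_1X_2). -/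
/-!
For four consecutive terms write `Δ(a, b, c, d) = a d - q b c`, so that `X_δ = v Δ(X₀, X₁, X₂, X₃)`
and `σ(X_δ) = v Δ(X₁, X₂, X₃, X₄)`. Both minors satisfy `q X₂ Δ = X₁ + q X₃`, a quantum form of
`X_{m-1} + X_{m+1} = X_δ X_m`: for `Δ(X₁, …, X₄)` this uses only `X₁X₂ = q X₂X₁` and the exchange
relations at `X₂, X₃`; for `Δ(X₀, …, X₃)` one first moves `X₂` past `X₀` (`q X₂X₀ = X₁² + q`,
after cancelling `X₂` on the right). Cancelling `q X₂` on the left gives the two minors equal.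
-/

section QuantumMinor

variable {R : Type*} [Ring R]

def quantumMinor (q a b c d : R) : R :=
  a * d - q * (b * c)

variable {q a b c d e : R}

theorem exchange_swap (hq : ∀ x, Commute q x) (hc : IsRightRegular c)
    (hbc : b * c = q * (c * b)) (hac : a * c = q * b ^ 2 + 1) :
    q * (c * a) = b ^ 2 + q := by
  refine hc (sub_eq_zero.1 ?_)
  have hL : ∀ x y, x * (q * y) = q * (x * y) := fun x y => ((hq x).left_comm y).symm
  have certificate : q * (c * a) * c - (b ^ 2 + q) * c =
      q * c * (a * c - (q * b ^ 2 + 1)) + q * (q * (c * b) - b * c) * b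
        + b * (q * (c * b) - b * c) := by
    simp only [mul_sub, sub_mul, mul_add, add_mul, mul_assoc, hL, sq, mul_one]
    noncomm_ring
  simp [certificate, hac, ← hbc]

theorem mul_quantumMinor_of_exchange (hq : ∀ x, Commute q x) (hc : IsRightRegular c)
    (hbc : b * c = q * (c * b)) (hac : a * c = q * b ^ 2 + 1) (hbd : b * d = q * c ^ 2 + 1) :
    q * c * quantumMinor q a b c d = b + q * d := by
  rw [← sub_eq_zero]
  have hL : ∀ x y, x * (q * y) = q * (x * y) := fun x y => ((hq x).left_comm y).symm
  have certificate : q * c * quantumMinor q a b c d - (b + q * d) =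
      (q * (c * a) - (b ^ 2 + q)) * d + b * (b * d - (q * c ^ 2 + 1))
        - q * (q * (c * b) - b * c) * c := by
    simp only [quantumMinor, mul_sub, sub_mul, mul_add, add_mul, mul_assoc, hL, sq, mul_one]
    noncomm_ring
  simp [certificate, exchange_swap hq hc hbc hac, hbd, ← hbc]

theorem mul_quantumMinor_succ_of_exchange (hq : ∀ x, Commute q x)
    (hbc : b * c = q * (c * b)) (hbd : b * d = q * c ^ 2 + 1) (hce : c * e = q * d ^ 2 + 1) :
    q * c * quantumMinor q b c d e = b + q * d := by
  rw [← sub_eq_zero]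
  have hL : ∀ x y, x * (q * y) = q * (x * y) := fun x y => ((hq x).left_comm y).symm
  have certificate : q * c * quantumMinor q b c d e - (b + q * d) =
      (q * (c * b) - b * c) * e + b * (c * e - (q * d ^ 2 + 1))
        - q * ((q * c ^ 2 + 1) - b * d) * d := by
    simp only [quantumMinor, mul_sub, sub_mul, mul_add, add_mul, mul_assoc, hL, sq, mul_one]
    noncomm_ring
  simp [certificate, hce, hbd, ← hbc]

theorem quantumMinor_succ_eq (hq : ∀ x, Commute q x) (hqc : IsLeftRegular (q * c))
    (hc : IsRightRegular c) (hbc : b * c = q * (c * b)) (hac : a * c = q * b ^ 2 + 1)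
    (hbd : b * d = q * c ^ 2 + 1) (hce : c * e = q * d ^ 2 + 1) :
    quantumMinor q b c d e = quantumMinor q a b c d :=
  hqc <| (mul_quantumMinor_succ_of_exchange hq hbc hbd hce).trans
    (mul_quantumMinor_of_exchange hq hc hbc hac hbd).symm

end QuantumMinor

theorem sigma_fixes_Xdelta_general
{F : Type*} [DivisionRing F] (v : F)
    (hvc : ∀ x : F, v * x = x * v)
    (X : ℤ → F) (hXne : ∀ m : ℤ, X m ≠ 0)
    (h12 : X 1 * X 2 = v ^ 2 * (X 2 * X 1))
    (hrec : ∀ m : ℤ, X (m - 1) * X (m + 1) = v ^ 2 * X m ^ 2 + 1)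
    (σ : F ≃+* F) (hσv : σ v = v) (hσX : ∀ m : ℤ, σ (X m) = X (m + 1)) :
    σ (v * (X 0 * X 3 - v ^ 2 * (X 1 * X 2))) = v * (X 0 * X 3 - v ^ 2 * (X 1 * X 2)) := by
  have hq : ∀ x, Commute (v ^ 2) x := fun x => Commute.pow_left (hvc x) 2
  have hv : v ≠ 0 := by
    rintro rfl
    exact mul_ne_zero (hXne 1) (hXne 2) (by simpa using h12)
  have hX2 : IsRegular (v ^ 2 * X 2) :=
    .of_ne_zero (mul_ne_zero (pow_ne_zero 2 hv) (hXne 2))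
  have shift : quantumMinor (v ^ 2) (X 1) (X 2) (X 3) (X 4)
      = quantumMinor (v ^ 2) (X 0) (X 1) (X 2) (X 3) :=
    quantumMinor_succ_eq hq hX2.left (IsRegular.of_ne_zero (hXne 2)).right h12
      (by simpa using hrec 1) (by simpa using hrec 2) (by simpa using hrec 3)
  simp only [map_mul, map_sub, map_pow, hσv, hσX, Int.reduceAdd]
  exact congrArg (v * ·) shift

/-- The `ℚ(q^{1/2})`-algebra automorphism `σ` determined by `σ(X_m) = X_{m+1}`
fixes `X_δ = q^{1/2}(X₀X₃ - qX₁X₂)`. -/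
theorem sigma_fixes_Xdelta
{F : Type*} [DivisionRing F] (v : F) (hv : v ≠ 0)
    (hvc : ∀ x : F, v * x = x * v)
    (X : ℤ → F) (hXne : ∀ m : ℤ, X m ≠ 0)
    (h12 : X 1 * X 2 = v ^ 2 * (X 2 * X 1))
    (hrec : ∀ m : ℤ, X (m - 1) * X (m + 1) = v ^ 2 * X m ^ 2 + 1)
    (σ : F ≃+* F) (hσv : σ v = v) (hσX : ∀ m : ℤ, σ (X m) = X (m + 1)) :
    σ (v * (X 0 * X 3 - v ^ 2 * (X 1 * X 2))) = v * (X 0 * X 3 - v ^ 2 * (X 1 * X 2)) :=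
  sigma_fixes_Xdelta_general v hvc X hXne h12 hrec σ hσv hσX
end
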